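/- arXiv:2203.04416 — 2 statements merged into one kernel-verified Lean document; each statement's English description precedes it below -/
import Mathlib

section
/- Suppose K satisfies the CBF constraint −(∇h(x)ᵀ B K Y(x) + c_h h(x)) ≤ 0 and the CLF constraint ∇V(x)ᵀ B K Y(x) + c_v V(x) ≤ 0 for all x in a set X, where c_h, c_v > 0. If s : X → ℝ satisfies 0 < s_min ≤ s(x) ≤ s_max, h(x) ≥ 0, and V(x) ≥ 0 on X, then the rescaled control ũ(x) = K·(s(x)⁻¹ Y(x)) satisfies the modified conditions −(∇h(x)ᵀ B ũ(x) + (c_h/s_min) h(x)) ≤ 0 and ∇V(x)ᵀ B ũ(x) + (c_v/s_max) V(x) ≤ 0 for all x ∈ X. -/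
open Matrix

/-- Proposition 2: if `K` satisfies the CBF and CLF constraints on `X`, then the rescaled
control `ũ(x) = K ((s x)⁻¹ • Y x)` satisfies the modified CBF/CLF conditions with
constants `c_h / s_min` and `c_v / s_max`. -/
theorem stmt2
    {n m p : ℕ}
    (B : Matrix (Fin n) (Fin m) ℝ) (K : Matrix (Fin m) (Fin p) ℝ)
    (Y : (Fin n → ℝ) → (Fin p → ℝ))
    (X : Set (Fin n → ℝ))
    (h V : (Fin n → ℝ) → ℝ)
    (gradh gradV : (Fin n → ℝ) → (Fin n → ℝ))
    (ch cv : ℝ) (hch : 0 < ch) (hcv : 0 < cv)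
    (hCBF : ∀ x ∈ X, -(gradh x ⬝ᵥ B.mulVec (K.mulVec (Y x)) + ch * h x) ≤ 0)
    (hCLF : ∀ x ∈ X, gradV x ⬝ᵥ B.mulVec (K.mulVec (Y x)) + cv * V x ≤ 0)
    (s : (Fin n → ℝ) → ℝ) (smin smax : ℝ) (hsmin : 0 < smin)
    (hs : ∀ x ∈ X, smin ≤ s x ∧ s x ≤ smax)
    (hpos : ∀ x ∈ X, 0 ≤ h x) (hVpos : ∀ x ∈ X, 0 ≤ V x)
    (ut : (Fin n → ℝ) → (Fin m → ℝ))
    (hut : ∀ x, ut x = K.mulVec ((s x)⁻¹ • Y x)) :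
    (∀ x ∈ X, -(gradh x ⬝ᵥ B.mulVec (ut x) + (ch / smin) * h x) ≤ 0) ∧
    (∀ x ∈ X, gradV x ⬝ᵥ B.mulVec (ut x) + (cv / smax) * V x ≤ 0) := by
  have key : ∀ x, gradh x ⬝ᵥ B.mulVec (ut x)
      = (s x)⁻¹ * (gradh x ⬝ᵥ B.mulVec (K.mulVec (Y x))) ∧
      gradV x ⬝ᵥ B.mulVec (ut x)
      = (s x)⁻¹ * (gradV x ⬝ᵥ B.mulVec (K.mulVec (Y x))) := by
    intro x
    rw [hut x, Matrix.mulVec_smul, Matrix.mulVec_smul]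
    constructor <;> simp [dotProduct_smul, smul_eq_mul]
  constructor <;> intro x hx
  · have hsx := hs x hx
    have hspos : 0 < s x := lt_of_lt_of_le hsmin hsx.1
    rw [(key x).1]
    have h1 := hCBF x hx
    have hh := hpos x hx
    set a := gradh x ⬝ᵥ B.mulVec (K.mulVec (Y x)) with ha
    have h2 : -(ch * h x) ≤ a := by linarith
    have h3 : (s x)⁻¹ * (-(ch * h x)) ≤ (s x)⁻¹ * a :=
      mul_le_mul_of_nonneg_left h2 (le_of_lt (inv_pos.mpr hspos))
    have h4 : (s x)⁻¹ ≤ smin⁻¹ := by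
      apply inv_anti₀ hsmin hsx.1
    have h5 : (s x)⁻¹ * (ch * h x) ≤ smin⁻¹ * (ch * h x) :=
      mul_le_mul_of_nonneg_right h4 (by positivity)
    have : -(smin⁻¹ * (ch * h x)) ≤ (s x)⁻¹ * a := by linarith
    rw [div_eq_mul_inv]
    nlinarith
  · have hsx := hs x hx
    have hspos : 0 < s x := lt_of_lt_of_le hsmin hsx.1
    have hsmaxpos : 0 < smax := lt_of_lt_of_le hspos hsx.2
    rw [(key x).2]
    have h1 := hCLF x hx
    have hh := hVpos x hx
    set a := gradV x ⬝ᵥ B.mulVec (K.mulVec (Y x)) with ha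
    have h2 : a ≤ -(cv * V x) := by linarith
    have h3 : (s x)⁻¹ * a ≤ (s x)⁻¹ * (-(cv * V x)) :=
      mul_le_mul_of_nonneg_left h2 (le_of_lt (inv_pos.mpr hspos))
    have h4 : smax⁻¹ ≤ (s x)⁻¹ := inv_anti₀ hspos hsx.2
    have h5 : smax⁻¹ * (cv * V x) ≤ (s x)⁻¹ * (cv * V x) :=
      mul_le_mul_of_nonneg_right h4 (by positivity)
    rw [div_eq_mul_inv]
    nlinarith
end

section
/- Let x, l_f, l_{f'}, l_i ∈ ℝ² with l_f, l_{f'}, l_i pairwise distinct and l_i not on the line through l_f and l_{f'}. Suppose l̃_f and l̃_{f'} satisfy l̃_f − x = s⁻¹(l_f − x) and l̃_{f'} − x = s⁻¹(l_{f'} − x) for some s > 0. Then the line through l̃_f with direction (l_i − l_f)/‖l_i − l_f‖ and the line through l̃_{f'} with direction (l_i − l_{f'})/‖l_i − l_{f'}‖ intersect in the unique point l̃_i = x + s⁻¹(l_i − x). -/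
open Set

lemma stmt13_aux (lf lf' li : EuclideanSpace ℝ (Fin 2))
    (hff' : lf ≠ lf')
    (hnc : ¬ Collinear ℝ ({lf, lf', li} : Set (EuclideanSpace ℝ (Fin 2))))
    (a b : ℝ) (hab : a • (li - lf) = b • (li - lf')) : a = 0 ∧ b = 0 := by
  by_cases h : a = b
  · subst h
    have h0 : a • (lf' - lf) = 0 := by
      linear_combination (norm := module) hab
    rcases smul_eq_zero.mp h0 with ha | hv
    · exact ⟨ha, ha⟩
    · exact absurd (sub_eq_zero.mp hv).symm hff'
  · exfalso
    apply hnc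
    have hd : a - b ≠ 0 := sub_ne_zero.mpr h
    have key : (a - b) • (li - lf) = (-b) • (lf' - lf) := by
      linear_combination (norm := module) hab
    have hli : li - lf = ((a - b)⁻¹ * (-b)) • (lf' - lf) := by
      have := congrArg (fun v => (a - b)⁻¹ • v) key
      simpa [smul_smul, inv_mul_cancel₀ hd] using this
    rw [collinear_iff_of_mem (show lf ∈ ({lf, lf', li} : Set _) by simp)]
    refine ⟨lf' - lf, ?_⟩
    rintro p (rfl | rfl | rfl)
    · exact ⟨0, by simp⟩
    · exact ⟨1, by simp⟩
    · refine ⟨(a - b)⁻¹ * (-b), ?_⟩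
      simp only [vadd_eq_add]
      rw [← hli]; abel

/-- Limited field-of-view reconstruction: if `l̃_f` and `l̃_{f'}` are the images of
`l_f, l_{f'}` under the homothety of ratio `s⁻¹` centered at `x`, then the line through
`l̃_f` with direction `(lᵢ - l_f)/‖lᵢ - l_f‖` and the line through `l̃_{f'}` with
direction `(lᵢ - l_{f'})/‖lᵢ - l_{f'}‖` intersect in the unique point
`l̃ᵢ = x + s⁻¹ (lᵢ - x)`. -/
theorem stmt13
    (x lf lf' li : EuclideanSpace ℝ (Fin 2))
    (hff' : lf ≠ lf') (hfi : lf ≠ li) (hf'i : lf' ≠ li)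
    (hnc : ¬ Collinear ℝ ({lf, lf', li} : Set (EuclideanSpace ℝ (Fin 2))))
    (s : ℝ) (hs : 0 < s)
    (ltf ltf' : EuclideanSpace ℝ (Fin 2))
    (hltf : ltf - x = s⁻¹ • (lf - x)) (hltf' : ltf' - x = s⁻¹ • (lf' - x)) :
    {p : EuclideanSpace ℝ (Fin 2) | ∃ t : ℝ, p = ltf + t • (‖li - lf‖⁻¹ • (li - lf))} ∩
      {p | ∃ r : ℝ, p = ltf' + r • (‖li - lf'‖⁻¹ • (li - lf'))} =
      {x + s⁻¹ • (li - x)} := by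
  have hnf : ‖li - lf‖ ≠ 0 := by
    simpa [sub_eq_zero] using hfi.symm
  have hnf' : ‖li - lf'‖ ≠ 0 := by
    simpa [sub_eq_zero] using hf'i.symm
  have hltf2 : ltf = x + s⁻¹ • (lf - x) := by
    rw [← hltf]; abel
  have hltf'2 : ltf' = x + s⁻¹ • (lf' - x) := by
    rw [← hltf']; abel
  ext p
  simp only [mem_inter_iff, mem_setOf_eq, mem_singleton_iff]
  constructor
  · rintro ⟨⟨t, ht⟩, ⟨r, hr⟩⟩
    have h1 : p = x + s⁻¹ • (lf - x) + (t * ‖li - lf‖⁻¹) • (li - lf) := by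
      rw [ht, hltf2, smul_smul]
    have h2 : p = x + s⁻¹ • (lf' - x) + (r * ‖li - lf'‖⁻¹) • (li - lf') := by
      rw [hr, hltf'2, smul_smul]
    have hab : (t * ‖li - lf‖⁻¹ - s⁻¹) • (li - lf)
        = (r * ‖li - lf'‖⁻¹ - s⁻¹) • (li - lf') := by
      linear_combination (norm := module) h2 - h1
    obtain ⟨ha, _⟩ := stmt13_aux lf lf' li hff' hnc _ _ hab
    have ht' : t * ‖li - lf‖⁻¹ = s⁻¹ := by linarith [sub_eq_zero.mp ha]
    rw [h1, ht']
    module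
  · rintro rfl
    constructor
    · refine ⟨s⁻¹ * ‖li - lf‖, ?_⟩
      rw [hltf2, smul_smul, mul_assoc, mul_inv_cancel₀ hnf, mul_one]
      module
    · refine ⟨s⁻¹ * ‖li - lf'‖, ?_⟩
      rw [hltf'2, smul_smul, mul_assoc, mul_inv_cancel₀ hnf', mul_one]
      module
end
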